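/- Let T(h) denote the transmission of the vertex 0 in MC(2^h), i.e. T(h) = Σ_{v ∈ ℤ/2^hℤ} d(0,v) (which, since MC(2^h) is a transmission-regular circulant graph, equals its distance spectral radius). Then for h ≥ 2: if h = 2n is even, T(h) = 2·(T(h−1) + 2^{h−1} − (4^n − 1)/3) − 1, and if h = 2n+1 is odd, T(h) = 2·(T(h−1) + 2^{h−1} − 2(4^n − 1)/3) − 1. -/

import Mathlib

/-- The circulant graph `Cay(Z_n, S)`: vertices are `ZMod n`, and distinct
vertices `x, y` are adjacent iff `x - y ≡ s` or `y - x ≡ s (mod n)` for some `s ∈ S`. -/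
def circulantGraph (n : ℕ) (S : Set ℕ) : SimpleGraph (ZMod n) where
  Adj x y := x ≠ y ∧ ∃ s ∈ S, (x - y = (s : ZMod n) ∨ y - x = (s : ZMod n))
  symm := by
    constructor
    rintro x y ⟨hne, s, hs, h⟩
    exact ⟨hne.symm, s, hs, h.symm⟩
  loopless := by
    constructor
    rintro x ⟨hne, -⟩
    exact hne rfl

/-- The multiplicative circulant graph `MC(m^h) = Cay(Z_{m^h}, {m^0, m^1, …, m^{h-1}})`. -/
def MCGraph (m h : ℕ) : SimpleGraph (ZMod (m ^ h)) :=
  circulantGraph (m ^ h) {s | ∃ i < h, s = m ^ i}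

/-- The transmission of the vertex `0` in `MC(2^h)`: the sum of the distances from
`0` to all vertices (equal to the distance spectral radius of this circulant graph). -/
noncomputable def MCtwoTransmission (h : ℕ) : ℕ :=
  ∑ v : ZMod (2 ^ h), (MCGraph 2 h).dist 0 v

open SimpleGraph Finset

def ok (h : ℕ) (a : ℤ) : Prop := ∃ e < h, a = 2^e ∨ a = -2^e

def MRep (h k : ℕ) (v : ZMod (2^h)) : Prop :=
  ∃ s : Multiset ℤ, Multiset.card s = k ∧ (∀ a ∈ s, ok h a) ∧ ((s.sum : ℤ) : ZMod (2^h)) = v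

noncomputable def W (h v : ℕ) : ℕ := (MCGraph 2 h).dist 0 ((v : ℕ) : ZMod (2^h))

lemma cast_eq_iff (n : ℕ) (a b : ℤ) : ((a : ZMod n) = (b : ZMod n)) ↔ (n:ℤ) ∣ b - a := by
  rw [ZMod.intCast_eq_intCast_iff]
  exact Int.modEq_iff_dvd

lemma ok_cast_ne {h : ℕ} {a : ℤ} (ha : ok h a) : ((a : ℤ) : ZMod (2^h)) ≠ 0 := by
  have key : ∀ e, e < h → ((2^e : ℤ) : ZMod (2^h)) ≠ 0 := by
    intro e he
    have : ((2^e : ℤ) : ZMod (2^h)) = ((2^e : ℕ) : ZMod (2^h)) := by push_cast; ring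
    rw [this, Ne, ZMod.natCast_eq_zero_iff]
    intro hd
    have h1 : 2^h ≤ 2^e := Nat.le_of_dvd (by positivity) hd
    have h2 : (2:ℕ)^e < 2^h := Nat.pow_lt_pow_right one_lt_two he
    omega
  obtain ⟨e, he, rfl | rfl⟩ := ha
  · exact key e he
  · intro hz
    apply key e he
    rwa [Int.cast_neg, neg_eq_zero] at hz

lemma adj_of_ok {h : ℕ} {x y : ZMod (2^h)} {a : ℤ} (ha : ok h a)
    (hd : y - x = (a : ZMod (2^h))) : (MCGraph 2 h).Adj x y := by
  have hne : x ≠ y := by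
    intro hxy
    exact ok_cast_ne ha (by rw [← hd, hxy, sub_self])
  obtain ⟨e, he, h1 | h1⟩ := ha
  · refine ⟨hne, 2^e, ⟨e, he, rfl⟩, Or.inr ?_⟩
    rw [hd, h1]; push_cast; ring
  · refine ⟨hne, 2^e, ⟨e, he, rfl⟩, Or.inl ?_⟩
    have : x - y = -(a : ZMod (2^h)) := by rw [← hd]; ring
    rw [this, h1]; push_cast; ring

lemma adj_diff {h : ℕ} {x y : ZMod (2^h)} (hadj : (MCGraph 2 h).Adj x y) :
    ∃ a : ℤ, ok h a ∧ y - x = (a : ZMod (2^h)) := by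
  obtain ⟨-, s, ⟨i, hi, rfl⟩, hc | hc⟩ := hadj
  · refine ⟨-(2^i), ⟨i, hi, Or.inr rfl⟩, ?_⟩
    have : y - x = -(x - y) := by ring
    rw [this, hc]; push_cast; ring
  · refine ⟨2^i, ⟨i, hi, Or.inl rfl⟩, ?_⟩
    rw [hc]; push_cast; ring

lemma rep_of_walk {h : ℕ} {x y : ZMod (2^h)} (p : (MCGraph 2 h).Walk x y) :
    MRep h p.length (y - x) := by
  induction p with
  | nil => exact ⟨0, rfl, by simp, by simp⟩
  | @cons x z y hadj p ih =>
    obtain ⟨s, hc, hok, hs⟩ := ih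
    obtain ⟨a, ha, hd⟩ := adj_diff hadj
    refine ⟨a ::ₘ s, by simp [hc], ?_, ?_⟩
    · intro b hb
      rcases Multiset.mem_cons.1 hb with rfl | hb
      · exact ha
      · exact hok b hb
    · rw [Multiset.sum_cons, Int.cast_add, hs, ← hd]
      ring

lemma walk_of_ok {h : ℕ} (s : Multiset ℤ) (hok : ∀ a ∈ s, ok h a) (x : ZMod (2^h)) :
    ∃ p : (MCGraph 2 h).Walk x (x + ((s.sum : ℤ) : ZMod (2^h))), p.length = Multiset.card s := by
  induction s using Multiset.induction_on with
  | empty => exact ⟨Walk.nil.copy rfl (by simp), by simp only [Walk.length_copy, Walk.length_nil, Multiset.card_zero]⟩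
  | cons a s ih =>
    obtain ⟨p, hp⟩ := ih (fun b hb => hok b (Multiset.mem_cons_of_mem hb))
    have hadj : (MCGraph 2 h).Adj (x + ((s.sum : ℤ) : ZMod (2^h)))
        (x + (((a ::ₘ s).sum : ℤ) : ZMod (2^h))) := by
      apply adj_of_ok (hok a (Multiset.mem_cons_self a s))
      rw [Multiset.sum_cons]; push_cast; ring
    exact ⟨p.concat hadj, by simp [hp]⟩

lemma walk_of_rep {h : ℕ} {k : ℕ} {v : ZMod (2^h)} (hr : MRep h k v) :
    ∃ p : (MCGraph 2 h).Walk 0 v, p.length = k := by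
  obtain ⟨s, hc, hok, hs⟩ := hr
  obtain ⟨p, hp⟩ := walk_of_ok s hok 0
  exact ⟨p.copy rfl (by rw [zero_add, hs]), by simp [hp, hc]⟩

lemma reach {h : ℕ} (hh : 1 ≤ h) (v : ZMod (2^h)) : (MCGraph 2 h).Reachable 0 v := by
  haveI : NeZero (2^h) := ⟨pow_ne_zero h two_ne_zero⟩
  have key : ∀ n : ℕ, (MCGraph 2 h).Reachable 0 ((n : ℕ) : ZMod (2^h)) := by
    intro n
    induction n with
    | zero => simpa using Reachable.refl (0 : ZMod (2^h))
    | succ n ih =>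
      refine ih.trans (Adj.reachable ?_)
      apply adj_of_ok (a := 1) ⟨0, hh, Or.inl (by norm_num)⟩
      push_cast; ring
  have := key v.val
  rwa [ZMod.natCast_rightInverse v] at this

lemma dist_le_of_rep {h : ℕ} (hh : 1 ≤ h) {k : ℕ} {v : ZMod (2^h)} (hr : MRep h k v) :
    (MCGraph 2 h).dist 0 v ≤ k := by
  obtain ⟨p, hp⟩ := walk_of_rep hr
  exact hp ▸ SimpleGraph.dist_le p

lemma rep_dist {h : ℕ} (hh : 1 ≤ h) (v : ZMod (2^h)) :
    MRep h ((MCGraph 2 h).dist 0 v) v := by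
  obtain ⟨p, hp⟩ := (reach hh v).exists_walk_length_eq_dist
  have := rep_of_walk p
  rw [hp, sub_zero] at this
  exact this

lemma W_le_of_rep {h : ℕ} (hh : 1 ≤ h) {k v : ℕ} (hr : MRep h k ((v : ℕ) : ZMod (2^h))) :
    W h v ≤ k := dist_le_of_rep hh hr

lemma W_rep {h : ℕ} (hh : 1 ≤ h) (v : ℕ) : MRep h (W h v) ((v : ℕ) : ZMod (2^h)) :=
  rep_dist hh _

/-- congruence form: a rep sum is ≡ v mod 2^h. -/
lemma rep_dvd {h k v : ℕ} (hr : MRep h k ((v : ℕ) : ZMod (2^h))) :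
    ∃ s : Multiset ℤ, Multiset.card s = k ∧ (∀ a ∈ s, ok h a) ∧ ((2:ℤ)^h) ∣ (v - s.sum) := by
  obtain ⟨s, hc, hok, hs⟩ := hr
  refine ⟨s, hc, hok, ?_⟩
  have : ((s.sum : ℤ) : ZMod (2^h)) = (((v : ℤ)) : ZMod (2^h)) := by rw [hs]; push_cast; ring
  have := (cast_eq_iff (2^h) s.sum v).1 this
  rwa [Nat.cast_pow] at this

lemma rep_of_dvd {h k v : ℕ} (s : Multiset ℤ) (hc : Multiset.card s = k)
    (hok : ∀ a ∈ s, ok h a) (hd : ((2:ℤ)^h) ∣ (v - s.sum)) :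
    MRep h k ((v : ℕ) : ZMod (2^h)) := by
  refine ⟨s, hc, hok, ?_⟩
  have : ((s.sum : ℤ) : ZMod (2^h)) = (((v:ℤ)) : ZMod (2^h)) := by
    rw [cast_eq_iff]
    rwa [Nat.cast_pow]
  rw [this]; push_cast; ring

/-- halving: all elements even and ok (h+1) -/
lemma halve {h : ℕ} (s : Multiset ℤ) (hok : ∀ a ∈ s, ok (h+1) a ∧ (2:ℤ) ∣ a) :
    ∃ t : Multiset ℤ, Multiset.card t = Multiset.card s ∧ (∀ a ∈ t, ok h a) ∧
      2 * t.sum = s.sum := by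
  induction s using Multiset.induction_on with
  | empty => exact ⟨0, by simp, by simp, by simp⟩
  | cons a s ih =>
    obtain ⟨t, hc, hokt, hsum⟩ := ih (fun b hb => hok b (Multiset.mem_cons_of_mem hb))
    obtain ⟨⟨e, he, hae⟩, hev⟩ := hok a (Multiset.mem_cons_self a s)
    have he0 : e ≠ 0 := by
      rintro rfl
      rcases hae with rfl | rfl <;> omega
    obtain ⟨e', rfl⟩ : ∃ e', e = e' + 1 := ⟨e - 1, by omega⟩
    have hb : ∃ b : ℤ, (b = 2^e' ∨ b = -2^e') ∧ a = 2 * b := by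
      rcases hae with rfl | rfl
      · exact ⟨2^e', Or.inl rfl, by ring⟩
      · exact ⟨-2^e', Or.inr rfl, by ring⟩
    obtain ⟨b, hb1, rfl⟩ := hb
    refine ⟨b ::ₘ t, by simp [hc], ?_, ?_⟩
    · intro c hc'
      rcases Multiset.mem_cons.1 hc' with rfl | hc'
      · exact ⟨e', by omega, hb1⟩
      · exact hokt c hc'
    · rw [Multiset.sum_cons, Multiset.sum_cons, ← hsum]; ring

lemma erase_sum {s : Multiset ℤ} {a : ℤ} (ha : a ∈ s) : (s.erase a).sum = s.sum - a := by
  have := Multiset.cons_erase ha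
  have h2 : (a ::ₘ s.erase a).sum = s.sum := by rw [this]
  rw [Multiset.sum_cons] at h2
  linarith

lemma ok_odd {h : ℕ} {a : ℤ} (ha : ok h a) (hodd : ¬ (2:ℤ) ∣ a) : a = 1 ∨ a = -1 := by
  obtain ⟨e, he, rfl | rfl⟩ := ha
  · left
    rcases Nat.eq_zero_or_pos e with rfl | hp
    · norm_num
    · exact absurd (dvd_pow_self 2 (by omega : e ≠ 0)) hodd
  · right
    rcases Nat.eq_zero_or_pos e with rfl | hp
    · norm_num
    · exfalso
      apply hodd
      exact (dvd_pow_self 2 (by omega : e ≠ 0)).neg_right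

/-- Reduction: an ok(h+1) multiset with even sum can be replaced by a doubled ok(h)
multiset of no greater cardinality with the same sum. -/
lemma reduce {h : ℕ} (hh : 1 ≤ h) :
    ∀ N (s : Multiset ℤ), Multiset.card s ≤ N → (∀ a ∈ s, ok (h+1) a) → (2:ℤ) ∣ s.sum →
    ∃ t : Multiset ℤ, Multiset.card t ≤ Multiset.card s ∧ (∀ a ∈ t, ok h a) ∧
      2 * t.sum = s.sum := by
  intro N
  induction N with
  | zero =>
    intro s hcard _ _
    have : s = 0 := Multiset.card_eq_zero.1 (by omega)
    subst this
    exact ⟨0, by simp, by simp, by simp⟩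
  | succ N IH =>
    intro s hcard hok hev
    by_cases hodd : ∃ a ∈ s, ¬ (2:ℤ) ∣ a
    · obtain ⟨a, has, ha2⟩ := hodd
      have ha1 : a = 1 ∨ a = -1 := ok_odd (hok a has) ha2
      set s' := s.erase a with hs'
      have hs'sum : s'.sum = s.sum - a := erase_sum has
      have hs'card : Multiset.card s' + 1 = Multiset.card s := by
        rw [hs', Multiset.card_erase_of_mem has]
        exact Nat.succ_pred_eq_of_pos (Multiset.card_pos_iff_exists_mem.2 ⟨a, has⟩)
      -- find another odd element in s'
      have hodd' : ∃ b ∈ s', ¬ (2:ℤ) ∣ b := by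
        by_contra hall
        push_neg at hall
        have : (2:ℤ) ∣ s'.sum := Multiset.dvd_sum hall
        rw [hs'sum] at this
        rcases ha1 with rfl | rfl <;> omega
      obtain ⟨b, hbs, hb2⟩ := hodd'
      have hb1 : b = 1 ∨ b = -1 := ok_odd (hok b (Multiset.mem_of_mem_erase hbs)) hb2
      set s'' := s'.erase b with hs''
      have hs''sum : s''.sum = s.sum - a - b := by rw [hs'', erase_sum hbs, hs'sum]
      have hs''card : Multiset.card s'' + 1 = Multiset.card s' := by
        rw [hs'', Multiset.card_erase_of_mem hbs]
        exact Nat.succ_pred_eq_of_pos (Multiset.card_pos_iff_exists_mem.2 ⟨b, hbs⟩)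
      have hmem'' : ∀ c ∈ s'', ok (h+1) c := fun c hc =>
        hok c (Multiset.mem_of_mem_erase (Multiset.mem_of_mem_erase hc))
      have hle'' : Multiset.card s'' ≤ N := by omega
      by_cases hab : a + b = 0
      · -- drop both
        obtain ⟨t, htc, htok, htsum⟩ := IH s'' hle'' hmem''
          (by rw [hs''sum]; rcases hev with ⟨c, hc⟩; exact ⟨c, by omega⟩)
        exact ⟨t, by omega, htok, by rw [htsum, hs''sum]; omega⟩
      · -- a + b = ±2
        have hab2 : a + b = 2 ∨ a + b = -2 := by rcases ha1 with rfl|rfl <;> rcases hb1 with rfl|rfl <;> omega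
        have hokab : ok (h+1) (a+b) := by
          rcases hab2 with hE | hE <;> rw [hE] <;> exact ⟨1, by omega, by norm_num⟩
        set u := (a+b) ::ₘ s'' with hu
        have husum : u.sum = s.sum := by rw [hu, Multiset.sum_cons, hs''sum]; ring
        have hucard : Multiset.card u = Multiset.card s - 1 := by
          rw [hu]; simp; omega
        obtain ⟨t, htc, htok, htsum⟩ := IH u (by omega)
          (by intro c hc; rcases Multiset.mem_cons.1 hc with rfl | hc
              · exact hokab
              · exact hmem'' c hc)
          (by rw [husum]; exact hev)
        exact ⟨t, by omega, htok, by rw [htsum, husum]⟩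
    · push_neg at hodd
      obtain ⟨t, htc, htok, htsum⟩ := halve s (fun c hc => ⟨hok c hc, hodd c hc⟩)
      exact ⟨t, by omega, htok, htsum⟩

lemma sum_map_two (s : Multiset ℤ) : (s.map (fun a => 2*a)).sum = 2 * s.sum := by
  induction s using Multiset.induction_on with
  | empty => simp
  | cons a s ih => simp [ih]; ring

lemma ok_one {h : ℕ} (hh : 1 ≤ h) : ok h 1 := ⟨0, hh, Or.inl (by norm_num)⟩
lemma ok_neg_one {h : ℕ} (hh : 1 ≤ h) : ok h (-1) := ⟨0, hh, Or.inr (by norm_num)⟩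

lemma W_even {h : ℕ} (hh : 1 ≤ h) (v : ℕ) : W (h+1) (2*v) = W h v := by
  apply le_antisymm
  · obtain ⟨s, hc, hok, c, hdvd⟩ := rep_dvd (W_rep (h := h) hh v)
    apply W_le_of_rep (by omega)
    apply rep_of_dvd (s.map (fun a => 2*a)) (by rw [Multiset.card_map, hc])
    · intro b hb
      obtain ⟨a, ha, rfl⟩ := Multiset.mem_map.1 hb
      obtain ⟨e, he, h1 | h1⟩ := hok a ha
      · exact ⟨e+1, by omega, Or.inl (by rw [h1]; ring)⟩
      · exact ⟨e+1, by omega, Or.inr (by rw [h1]; ring)⟩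
    · refine ⟨c, ?_⟩
      rw [sum_map_two]
      push_cast
      rw [pow_succ]
      linarith [hdvd]
  · obtain ⟨s, hc, hok, c, hdvd⟩ := rep_dvd (W_rep (h := h+1) (by omega) (2*v))
    have hev : (2:ℤ) ∣ s.sum := by
      refine ⟨v - 2^h * c, ?_⟩
      push_cast at hdvd
      rw [pow_succ] at hdvd
      linarith
    obtain ⟨t, htc, htok, htsum⟩ := reduce hh (Multiset.card s) s le_rfl hok hev
    have hd : ((2:ℤ)^h) ∣ (v - t.sum) := by
      refine ⟨c, ?_⟩
      have h2 : (2:ℤ) * ((v:ℤ) - t.sum) = 2 * (2^h * c) := by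
        push_cast at hdvd
        rw [pow_succ] at hdvd
        linarith
      exact mul_left_cancel₀ two_ne_zero h2
    calc W h v ≤ Multiset.card t := W_le_of_rep hh (rep_of_dvd t rfl htok hd)
    _ ≤ Multiset.card s := htc
    _ = W (h+1) (2*v) := hc

lemma W_odd {h : ℕ} (hh : 1 ≤ h) (v : ℕ) :
    W h (2*v+1) = 1 + min (W h (2*v)) (W h (2*v+2)) := by
  apply le_antisymm
  · have h1 : W h (2*v+1) ≤ W h (2*v) + 1 := by
      obtain ⟨s, hc, hok, c, hdvd⟩ := rep_dvd (W_rep hh (2*v))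
      apply W_le_of_rep hh
      apply rep_of_dvd ((1:ℤ) ::ₘ s) (by simp [hc])
      · intro b hb
        rcases Multiset.mem_cons.1 hb with rfl | hb
        · exact ok_one hh
        · exact hok b hb
      · rw [Multiset.sum_cons]
        refine ⟨c, ?_⟩
        push_cast at hdvd ⊢
        linarith
    have h2 : W h (2*v+1) ≤ W h (2*v+2) + 1 := by
      obtain ⟨s, hc, hok, c, hdvd⟩ := rep_dvd (W_rep hh (2*v+2))
      apply W_le_of_rep hh
      apply rep_of_dvd ((-1:ℤ) ::ₘ s) (by simp [hc])
      · intro b hb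
        rcases Multiset.mem_cons.1 hb with rfl | hb
        · exact ok_neg_one hh
        · exact hok b hb
      · rw [Multiset.sum_cons]
        refine ⟨c, ?_⟩
        push_cast at hdvd ⊢
        linarith
    rcases le_total (W h (2*v)) (W h (2*v+2)) with hle | hle
    · rw [min_eq_left hle]; omega
    · rw [min_eq_right hle]; omega
  · obtain ⟨s, hc, hok, c, hdvd⟩ := rep_dvd (W_rep hh (2*v+1))
    obtain ⟨d, hd2⟩ : (2:ℤ) ∣ 2^h := dvd_pow_self 2 (by omega)
    have hsodd : ¬ (2:ℤ) ∣ s.sum := by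
      rintro ⟨m, hm⟩
      have h1 : (2:ℤ)^h * c = 2*(d*c) := by rw [hd2]; ring
      push_cast at hdvd
      omega
    have hex : ∃ a ∈ s, ¬ (2:ℤ) ∣ a := by
      by_contra hall
      push_neg at hall
      exact hsodd (Multiset.dvd_sum hall)
    obtain ⟨a, has, ha2⟩ := hex
    have ha1 := ok_odd (hok a has) ha2
    have hcpos : 0 < Multiset.card s := Multiset.card_pos_iff_exists_mem.2 ⟨a, has⟩
    have hesum : (s.erase a).sum = s.sum - a := erase_sum has
    have hecard : Multiset.card (s.erase a) = Multiset.card s - 1 := by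
      rw [Multiset.card_erase_of_mem has]; exact Nat.pred_eq_sub_one
    have heok : ∀ b ∈ s.erase a, ok h b := fun b hb => hok b (Multiset.mem_of_mem_erase hb)
    rcases ha1 with h1 | h1
    · have : W h (2*v) ≤ Multiset.card s - 1 := by
        apply W_le_of_rep hh
        apply rep_of_dvd (s.erase a) hecard heok
        refine ⟨c, ?_⟩
        rw [hesum]
        push_cast at hdvd ⊢
        linarith
      have hm1 := min_le_left (W h (2*v)) (W h (2*v+2))
      omega
    · have : W h (2*v+2) ≤ Multiset.card s - 1 := by
        apply W_le_of_rep hh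
        apply rep_of_dvd (s.erase a) hecard heok
        refine ⟨c, ?_⟩
        rw [hesum]
        push_cast at hdvd ⊢
        linarith
      have hm2 := min_le_right (W h (2*v)) (W h (2*v+2))
      omega

lemma W_step {h : ℕ} (hh : 1 ≤ h) (v : ℕ) :
    W h (v+1) ≤ W h v + 1 ∧ W h v ≤ W h (v+1) + 1 := by
  constructor
  · obtain ⟨s, hc, hok, c, hdvd⟩ := rep_dvd (W_rep hh v)
    apply W_le_of_rep hh
    apply rep_of_dvd ((1:ℤ) ::ₘ s) (by simp [hc])
    · intro b hb
      rcases Multiset.mem_cons.1 hb with rfl | hb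
      · exact ok_one hh
      · exact hok b hb
    · rw [Multiset.sum_cons]
      refine ⟨c, ?_⟩
      push_cast at hdvd ⊢
      linarith
  · obtain ⟨s, hc, hok, c, hdvd⟩ := rep_dvd (W_rep hh (v+1))
    apply W_le_of_rep hh
    apply rep_of_dvd ((-1:ℤ) ::ₘ s) (by simp [hc])
    · intro b hb
      rcases Multiset.mem_cons.1 hb with rfl | hb
      · exact ok_neg_one hh
      · exact hok b hb
    · rw [Multiset.sum_cons]
      refine ⟨c, ?_⟩
      push_cast at hdvd ⊢
      linarith

noncomputable def Tn (h : ℕ) : ℕ := ∑ v ∈ Finset.range (2^h), W h v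
noncomputable def Dn (h : ℕ) : ℕ := ∑ v ∈ Finset.range (2^h), Nat.dist (W h (v+1)) (W h v)

lemma W_zero (h : ℕ) : W h 0 = 0 := by
  simp [W, SimpleGraph.dist_self]

lemma W_pow (h : ℕ) : W h (2^h) = 0 := by
  rw [W, ZMod.natCast_self, SimpleGraph.dist_self]

lemma T_eq (h : ℕ) : MCtwoTransmission h = Tn h := by
  haveI : NeZero (2^h) := ⟨pow_ne_zero h two_ne_zero⟩
  rw [MCtwoTransmission, Tn]
  refine Finset.sum_nbij' (i := fun v => ZMod.val v) (j := fun i => ((i : ℕ) : ZMod (2^h)))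
    ?_ ?_ ?_ ?_ ?_
  · intro v _
    exact Finset.mem_range.2 (ZMod.val_lt v)
  · intro i _
    exact Finset.mem_univ _
  · intro v _
    exact ZMod.natCast_rightInverse v
  · intro i hi
    exact ZMod.val_cast_of_lt (Finset.mem_range.1 hi)
  · intro v _
    rw [W, ZMod.natCast_rightInverse v]

lemma sum_split (f : ℕ → ℕ) : ∀ N, ∑ i ∈ Finset.range (2*N), f i =
    ∑ i ∈ Finset.range N, f (2*i) + ∑ i ∈ Finset.range N, f (2*i+1) := by
  intro N
  induction N with
  | zero => simp
  | succ N ih =>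
    have h1 : 2*(N+1) = 2*N+1+1 := by ring
    rw [h1, Finset.sum_range_succ, Finset.sum_range_succ, ih,
      Finset.sum_range_succ (fun i => f (2*i)), Finset.sum_range_succ (fun i => f (2*i+1))]
    omega

lemma sum_shift (f : ℕ → ℕ) (N : ℕ) (h0 : f 0 = 0) (hN : f N = 0) :
    ∑ i ∈ Finset.range N, f (i+1) = ∑ i ∈ Finset.range N, f i := by
  have h1 := Finset.sum_range_succ' f N
  have h2 := Finset.sum_range_succ f N
  omega

lemma minmax (a b : ℕ) : 2 * min a b + Nat.dist b a = a + b := by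
  rcases le_total a b with hle | hle
  · rw [min_eq_left hle]; simp only [Nat.dist]; omega
  · rw [min_eq_right hle]; simp only [Nat.dist]; omega

lemma T_rec {h : ℕ} (hh : 1 ≤ h) : 2 * Tn (h+1) + Dn h = 4 * Tn h + 2^(h+1) := by
  have ho : ∀ v, W (h+1) (2*v+1) = 1 + min (W h v) (W h (v+1)) := by
    intro v
    rw [W_odd (by omega) v, W_even hh v, show 2*v+2 = 2*(v+1) from by ring, W_even hh (v+1)]
  have hA : Tn (h+1) = Tn h + (2^h + ∑ v ∈ Finset.range (2^h), min (W h v) (W h (v+1))) := by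
    rw [Tn, show (2:ℕ)^(h+1) = 2*2^h from by ring, sum_split]
    congr 1
    · exact Finset.sum_congr rfl fun v _ => W_even hh v
    · rw [Finset.sum_congr rfl fun v _ => ho v, Finset.sum_add_distrib,
        Finset.sum_const, Finset.card_range, smul_eq_mul, mul_one]
  have hB : 2 * (∑ v ∈ Finset.range (2^h), min (W h v) (W h (v+1))) + Dn h = 2 * Tn h := by
    have hshift : ∑ v ∈ Finset.range (2^h), W h (v+1) = Tn h :=
      sum_shift (W h) (2^h) (W_zero h) (W_pow h)
    calc 2 * (∑ v ∈ Finset.range (2^h), min (W h v) (W h (v+1))) + Dn h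
        = ∑ v ∈ Finset.range (2^h),
            (2 * min (W h v) (W h (v+1)) + Nat.dist (W h (v+1)) (W h v)) := by
          rw [Finset.sum_add_distrib, Finset.mul_sum, Dn]
      _ = ∑ v ∈ Finset.range (2^h), (W h v + W h (v+1)) :=
          Finset.sum_congr rfl fun v _ => minmax _ _
      _ = Tn h + ∑ v ∈ Finset.range (2^h), W h (v+1) := by rw [Finset.sum_add_distrib, Tn]
      _ = 2 * Tn h := by rw [hshift]; ring
  have hpow : (2:ℕ)^(h+1) = 2 * 2^h := by ring
  omega

lemma dist_step {h : ℕ} (hh : 1 ≤ h) (v : ℕ) : Nat.dist (W h (v+1)) (W h v) ≤ 1 := by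
  obtain ⟨h1, h2⟩ := W_step hh v
  simp only [Nat.dist]; omega

lemma D_key (a b : ℕ) (hab : Nat.dist b a ≤ 1) :
    Nat.dist (1 + min a b) a + Nat.dist b (1 + min a b) + Nat.dist b a = 2 := by
  rcases le_total a b with hle | hle
  · rw [min_eq_left hle]
    simp only [Nat.dist] at *
    omega
  · rw [min_eq_right hle]
    simp only [Nat.dist] at *
    omega

lemma D_rec {h : ℕ} (hh : 1 ≤ h) : Dn (h+1) + Dn h = 2^(h+1) := by
  have ho : ∀ v, W (h+1) (2*v+1) = 1 + min (W h v) (W h (v+1)) := by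
    intro v
    rw [W_odd (by omega) v, W_even hh v, show 2*v+2 = 2*(v+1) from by ring, W_even hh (v+1)]
  have hsplit : Dn (h+1) = ∑ v ∈ Finset.range (2^h),
      Nat.dist (W (h+1) (2*v+1)) (W (h+1) (2*v)) +
      ∑ v ∈ Finset.range (2^h), Nat.dist (W (h+1) (2*v+2)) (W (h+1) (2*v+1)) := by
    rw [Dn, show (2:ℕ)^(h+1) = 2*2^h from by ring,
      sum_split (fun v => Nat.dist (W (h+1) (v+1)) (W (h+1) v))]
  calc Dn (h+1) + Dn h
      = ∑ v ∈ Finset.range (2^h),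
          (Nat.dist (W (h+1) (2*v+1)) (W (h+1) (2*v)) +
           Nat.dist (W (h+1) (2*v+2)) (W (h+1) (2*v+1)) +
           Nat.dist (W h (v+1)) (W h v)) := by
        rw [hsplit, Dn]
        rw [Finset.sum_add_distrib, Finset.sum_add_distrib]
    _ = ∑ v ∈ Finset.range (2^h), 2 := by
        refine Finset.sum_congr rfl fun v _ => ?_
        rw [ho v, W_even hh v, show 2*v+2 = 2*(v+1) from by ring, W_even hh (v+1)]
        exact D_key _ _ (dist_step hh v)
    _ = 2^(h+1) := by rw [Finset.sum_const, Finset.card_range, smul_eq_mul]; ring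

lemma W_one_one : W 1 1 = 1 := by
  apply le_antisymm
  · apply W_le_of_rep le_rfl
    apply rep_of_dvd ({1} : Multiset ℤ) rfl
    · intro b hb
      rw [Multiset.mem_singleton] at hb
      subst hb
      exact ok_one le_rfl
    · exact ⟨0, by simp⟩
  · by_contra hlt
    have h0 : W 1 1 = 0 := by omega
    rw [W] at h0
    rcases SimpleGraph.dist_eq_zero_iff_eq_or_not_reachable.1 h0 with he | hnr
    · exact absurd he (by decide)
    · exact hnr (reach le_rfl _)

lemma Dn_one : Dn 1 = 2 := by
  rw [Dn]
  rw [show (2:ℕ)^1 = 2 from rfl, Finset.sum_range_succ, Finset.sum_range_succ,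
    Finset.sum_range_zero]
  rw [show (1:ℕ)+1 = 2^1 from rfl]
  rw [W_zero, W_pow, W_one_one]
  decide

lemma four_pow_mod (n : ℕ) : ∃ m, (4:ℕ)^n = 3*m+1 := by
  induction n with
  | zero => exact ⟨0, rfl⟩
  | succ n ih =>
    obtain ⟨m, hm⟩ := ih
    exact ⟨4*m+1, by rw [pow_succ, hm]; ring⟩

lemma D_closed : ∀ n : ℕ, 3 * Dn (2*n+1) = 4^(n+1) + 2 ∧ 3 * Dn (2*n+2) + 2 = 2*4^(n+1) := by
  intro n
  induction n with
  | zero =>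
    have hr : Dn 2 + Dn 1 = 2^2 := D_rec (h := 1) le_rfl
    have h1 : Dn 1 = 2 := Dn_one
    have h2 : Dn (2*0+2) = 2 := by show Dn 2 = 2; omega
    constructor
    · rw [show 2*0+1 = 1 from rfl, h1]; norm_num
    · rw [h2]; norm_num
  | succ n ih =>
    obtain ⟨ih1, ih2⟩ := ih
    have hr1 : Dn (2*n+3) + Dn (2*n+2) = 2^(2*n+3) := D_rec (h := 2*n+2) (by omega)
    have hr2 : Dn (2*n+4) + Dn (2*n+3) = 2^(2*n+4) := D_rec (h := 2*n+3) (by omega)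
    have e1 : (2:ℕ)^(2*n+2) = 4^(n+1) := by
      rw [show 2*n+2 = 2*(n+1) from by ring, pow_mul]; norm_num
    have e2 : (2:ℕ)^(2*n+3) = 2 * 4^(n+1) := by rw [pow_succ, e1]; ring
    have e3 : (2:ℕ)^(2*n+4) = 4 * 4^(n+1) := by
      rw [show 2*n+4 = (2*n+3)+1 from rfl, pow_succ, e2]; ring
    have e4 : (4:ℕ)^(n+2) = 4 * 4^(n+1) := by rw [pow_succ]; ring
    constructor
    · show 3 * Dn (2*n+3) = 4^(n+2) + 2
      omega
    · show 3 * Dn (2*n+4) + 2 = 2 * 4^(n+2)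
      omega


/-- Recursion for the transmission (distance spectral radius) of `MC(2^h)`. -/
theorem MC_two_transmission_recursion (h : ℕ) (hh : 2 ≤ h) :
    (∀ n : ℕ, h = 2 * n →
      (MCtwoTransmission h : ℤ) =
        2 * ((MCtwoTransmission (h - 1) : ℤ) + (2 ^ (h - 1) - (4 ^ n - 1) / 3)) - 1) ∧
    (∀ n : ℕ, h = 2 * n + 1 →
      (MCtwoTransmission h : ℤ) =
        2 * ((MCtwoTransmission (h - 1) : ℤ) + (2 ^ (h - 1) - 2 * (4 ^ n - 1) / 3)) - 1) := by
  constructor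
  · rintro n rfl
    have hn : 1 ≤ n := by omega
    obtain ⟨k, rfl⟩ : ∃ k, n = k + 1 := ⟨n - 1, by omega⟩
    have hT : 2 * Tn (2*k+2) + Dn (2*k+1) = 4 * Tn (2*k+1) + 2^(2*k+2) :=
      T_rec (h := 2*k+1) (by omega)
    have hD : 3 * Dn (2*k+1) = 4^(k+1) + 2 := (D_closed k).1
    have hTe : MCtwoTransmission (2*(k+1)) = Tn (2*k+2) := T_eq (2*k+2)
    have hTe' : MCtwoTransmission (2*k+1) = Tn (2*k+1) := T_eq (2*k+1)
    obtain ⟨m, hm⟩ := four_pow_mod (k+1)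
    have hdiv : ((4:ℤ)^(k+1) - 1)/3 = (m:ℤ) := by
      have h4 : ((4:ℤ)^(k+1)) = 3*m + 1 := by exact_mod_cast hm
      rw [show ((4:ℤ)^(k+1) - 1) = 3 * m from by rw [h4]; ring]
      exact Int.mul_ediv_cancel_left _ (by norm_num)
    have hp : (2:ℕ)^(2*k+2) = 4^(k+1) := by
      rw [show 2*k+2 = 2*(k+1) from by ring, pow_mul]; norm_num
    have h2 : (2:ℕ)^(2*k+2) = 2 * 2^(2*k+1) := by rw [pow_succ]; ring
    rw [show 2*(k+1) - 1 = 2*k+1 from rfl, hTe, hTe', hdiv,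
      show ((2:ℤ)^(2*k+1)) = ((2^(2*k+1) : ℕ) : ℤ) from by push_cast; ring]
    omega
  · rintro n rfl
    have hn : 1 ≤ n := by omega
    obtain ⟨k, rfl⟩ : ∃ k, n = k + 1 := ⟨n - 1, by omega⟩
    have hT : 2 * Tn (2*k+3) + Dn (2*k+2) = 4 * Tn (2*k+2) + 2^(2*k+3) :=
      T_rec (h := 2*k+2) (by omega)
    have hD : 3 * Dn (2*k+2) + 2 = 2 * 4^(k+1) := (D_closed k).2
    have hTe : MCtwoTransmission (2*(k+1)+1) = Tn (2*k+3) := T_eq (2*k+3)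
    have hTe' : MCtwoTransmission (2*k+2) = Tn (2*k+2) := T_eq (2*k+2)
    obtain ⟨m, hm⟩ := four_pow_mod (k+1)
    have hdiv : (2 * ((4:ℤ)^(k+1) - 1))/3 = 2*(m:ℤ) := by
      have h4 : ((4:ℤ)^(k+1)) = 3*m + 1 := by exact_mod_cast hm
      rw [show (2 * ((4:ℤ)^(k+1) - 1)) = 3 * (2*m) from by rw [h4]; ring]
      exact Int.mul_ediv_cancel_left _ (by norm_num)
    have hp : (2:ℕ)^(2*k+2) = 4^(k+1) := by
      rw [show 2*k+2 = 2*(k+1) from by ring, pow_mul]; norm_num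
    have h2 : (2:ℕ)^(2*k+3) = 2 * 2^(2*k+2) := by rw [pow_succ]; ring
    rw [show 2*(k+1)+1 - 1 = 2*k+2 from rfl, hTe, hTe', hdiv,
      show ((2:ℤ)^(2*k+2)) = ((2^(2*k+2) : ℕ) : ℤ) from by push_cast; ring]
    omega
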